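/- arXiv:1812.07511 — 3 statements merged into one kernel-verified Lean document; each statement's English description precedes it below -/
import Mathlib

section
/- Let G be a D-doubling graph of vertex degree bound d, let K > 0 be an integer, let 0 < p < 1 and δ > 0. Then there exists an integer M (depending only on D, d, K, p, δ) such that for every vertex x of G and every integer s ≥ M, the number of integers t with s ≤ t < 2s satisfying |B_{t+K}(G,x)| / |B_{t-K}(G,x)| < 1 + δ is greater than p·s. -/
/-- The closed ball of radius `r` around `x` in the graph metric. -/
def gball {V : Type*} (G : SimpleGraph V) (x : V) (r : ℕ) : Set V :=
  {y | G.Reachable x y ∧ G.dist x y ≤ r}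

/-- All vertex degrees are bounded by `d`. -/
def DegLE {V : Type*} (G : SimpleGraph V) (d : ℕ) : Prop :=
  ∀ x : V, (G.neighborSet x).ncard ≤ d

/-- `G` is `D`-doubling. -/
def Doubling {V : Type*} (G : SimpleGraph V) (D : ℕ) : Prop :=
  ∀ (x : V) (s : ℕ), 1 ≤ s → (gball G x (2 * s)).ncard ≤ D * (gball G x s).ncard

/-- For a `D`-doubling graph of degree bound `d`, there is `M = M(D,d,K,p,δ)` such that
for every vertex `x` and every `s ≥ M`, more than `p·s` of the radii `t ∈ [s, 2s)` satisfy
`|B_{t+K}(G,x)| / |B_{t-K}(G,x)| < 1 + δ`. -/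
theorem stmt2 (D d K : ℕ) (p δ : ℝ) (hK : 0 < K) (hp : 0 < p) (hp1 : p < 1) (hδ : 0 < δ) :
    ∃ M : ℕ, ∀ (V : Type) (G : SimpleGraph V),
      DegLE G d → (∀ (x : V) (r : ℕ), (gball G x r).Finite) → Doubling G D →
      ∀ (x : V) (s : ℕ), M ≤ s →
        p * (s : ℝ) <
          (({t : ℕ | s ≤ t ∧ t < 2 * s ∧
            ((gball G x (t + K)).ncard : ℝ) < (1 + δ) * ((gball G x (t - K)).ncard : ℝ)}).ncard : ℝ) := by
  classical
  have h1δ : (1:ℝ) < 1 + δ := by linarith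
  obtain ⟨C, hC⟩ := pow_unbounded_of_one_lt ((D:ℝ)^2) h1δ
  refine ⟨max (3*K) (⌈(2*K*C : ℝ)/(1-p)⌉₊ + 1), ?_⟩
  intro V G _ hfin hdbl x s hs
  have hs3K : 3*K ≤ s := le_trans (le_max_left _ _) hs
  have hsN : (⌈(2*K*C : ℝ)/(1-p)⌉₊ + 1 : ℕ) ≤ s := le_trans (le_max_right _ _) hs
  -- ball size as a real
  set b : ℕ → ℝ := fun r => ((gball G x r).ncard : ℝ) with hb
  have hbpos : ∀ r, (1:ℝ) ≤ b r := by
    intro r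
    have hx : x ∈ gball G x r := ⟨SimpleGraph.Reachable.refl x, by simp [SimpleGraph.dist_self]⟩
    have h : 0 < (gball G x r).ncard := (Set.ncard_pos (hfin x r)).mpr ⟨x, hx⟩
    show (1:ℝ) ≤ ((gball G x r).ncard : ℝ)
    exact_mod_cast h
  have hmono : ∀ {r r' : ℕ}, r ≤ r' → b r ≤ b r' := by
    intro r r' h
    have : (gball G x r).ncard ≤ (gball G x r').ncard :=
      Set.ncard_le_ncard (fun y hy => ⟨hy.1, hy.2.trans (by exact_mod_cast h)⟩) (hfin x r')
    show ((gball G x r).ncard : ℝ) ≤ ((gball G x r').ncard : ℝ)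
    exact_mod_cast this
  have hdb : ∀ r : ℕ, 1 ≤ r → b (2*r) ≤ (D:ℝ) * b r := by
    intro r hr
    have h := hdbl x r hr
    calc b (2*r) = ((gball G x (2*r)).ncard : ℝ) := rfl
      _ ≤ ((D * (gball G x r).ncard : ℕ) : ℝ) := by exact_mod_cast h
      _ = (D:ℝ) * b r := by push_cast; rfl
  have htop : b (2*s + K) ≤ (D:ℝ)^2 * b (s - K) := by
    have h1 : 2*s + K ≤ 2*(2*(s-K)) := by omega
    have h2 : b (2*s+K) ≤ b (2*(2*(s-K))) := hmono h1
    have h3 : b (2*(2*(s-K))) ≤ (D:ℝ) * b (2*(s-K)) := hdb _ (by omega)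
    have h4 : b (2*(s-K)) ≤ (D:ℝ) * b (s-K) := hdb _ (by omega)
    have hD0 : (0:ℝ) ≤ (D:ℝ) := Nat.cast_nonneg D
    nlinarith [hbpos (s-K)]
  set P : ℕ → Prop := fun t => b (t + K) < (1+δ) * b (t - K) with hP
  set Ico := Finset.Ico s (2*s) with hIco
  set badF := Ico.filter (fun t => ¬ P t) with hbadF
  set goodF := Ico.filter P with hgoodF
  have hsep : ∀ a c : ℕ, a % (2*K) = c % (2*K) → a < c → a + 2*K ≤ c := by
    intro a c hmod hlt
    have hdvd : (2*K) ∣ c - a := (Nat.modEq_iff_dvd' hlt.le).mp hmod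
    have := Nat.le_of_dvd (by omega) hdvd
    omega
  have chain : ∀ n (F : Finset ℕ), F ⊆ badF →
      (∀ a ∈ F, ∀ c ∈ F, a % (2*K) = c % (2*K)) →
      F.card = n → ∀ hne : F.Nonempty,
      (1+δ)^n * b (s - K) ≤ b (F.max' hne + K) := by
    intro n
    induction n with
    | zero =>
      intro F _ _ hcard hne
      rw [Finset.card_eq_zero] at hcard
      subst hcard
      exact absurd hne (by simp)
    | succ n ih =>
      intro F hFbad hFmod hcard hne
      set t := F.max' hne with ht
      have htF : t ∈ F := F.max'_mem hne
      have htbad : t ∈ badF := hFbad htF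
      have htIco : t ∈ Ico := (Finset.mem_filter.mp htbad).1
      have hts : s ≤ t := (Finset.mem_Ico.mp htIco).1
      have hbadt : (1+δ) * b (t - K) ≤ b (t + K) := not_lt.mp ((Finset.mem_filter.mp htbad).2)
      rcases Finset.eq_empty_or_nonempty (F.erase t) with he | hne'
      · have hn : n = 0 := by
          have h := Finset.card_erase_of_mem htF
          rw [he, hcard] at h
          simp at h
          omega
        subst hn
        have hmm : b (s - K) ≤ b (t - K) := hmono (by omega)
        calc (1+δ)^1 * b (s-K) = (1+δ) * b (s-K) := by ring
          _ ≤ (1+δ) * b (t-K) := by nlinarith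
          _ ≤ b (t+K) := hbadt
      · set t' := (F.erase t).max' hne' with ht'
        have ht'F : t' ∈ F := Finset.mem_of_mem_erase ((F.erase t).max'_mem hne')
        have ht'ne : t' ≠ t := Finset.ne_of_mem_erase ((F.erase t).max'_mem hne')
        have ht'lt : t' < t := lt_of_le_of_ne (F.le_max' t' ht'F) ht'ne
        have hsep' : t' + 2*K ≤ t := hsep t' t (hFmod t' ht'F t htF) ht'lt
        have ihh := ih (F.erase t) ((Finset.erase_subset _ _).trans hFbad)
          (fun a ha c hc => hFmod a (Finset.mem_of_mem_erase ha) c (Finset.mem_of_mem_erase hc))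
          (by rw [Finset.card_erase_of_mem htF, hcard]; omega) hne'
        have h1 : b (t' + K) ≤ b (t - K) := hmono (by omega)
        calc (1+δ)^(n+1) * b (s-K) = (1+δ) * ((1+δ)^n * b (s-K)) := by ring
          _ ≤ (1+δ) * b (t' + K) := mul_le_mul_of_nonneg_left ihh (by linarith)
          _ ≤ (1+δ) * b (t - K) := mul_le_mul_of_nonneg_left h1 (by linarith)
          _ ≤ b (t + K) := hbadt
  have hfiber : ∀ r : ℕ, (badF.filter (fun t => t % (2*K) = r)).card ≤ C := by
    intro r
    by_contra hcon
    push_neg at hcon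
    set F := badF.filter (fun t => t % (2*K) = r) with hF
    have hne : F.Nonempty := Finset.card_pos.mp (by omega)
    have hch := chain F.card F (Finset.filter_subset _ _)
      (fun a ha c hc => by
        have h1 := (Finset.mem_filter.mp ha).2
        have h2 := (Finset.mem_filter.mp hc).2
        omega)
      rfl hne
    have hmIco : F.max' hne ∈ Ico :=
      (Finset.mem_filter.mp ((Finset.filter_subset _ _) (F.max'_mem hne))).1
    have hm2s : F.max' hne < 2*s := (Finset.mem_Ico.mp hmIco).2
    have hup : b (F.max' hne + K) ≤ b (2*s + K) := hmono (by omega)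
    have hle : (1+δ)^F.card * b (s-K) ≤ (D:ℝ)^2 * b (s-K) :=
      le_trans hch (le_trans hup htop)
    have hpow : (1+δ)^F.card ≤ (D:ℝ)^2 :=
      le_of_mul_le_mul_right hle (by linarith [hbpos (s-K)])
    have hlt : (1+δ)^F.card < (1+δ)^C := lt_of_le_of_lt hpow hC
    have := (pow_lt_pow_iff_right₀ h1δ).mp hlt
    omega
  have hbadcard : badF.card ≤ 2*K*C := by
    have heq := Finset.card_eq_sum_card_fiberwise
      (f := fun t => t % (2*K)) (s := badF) (t := Finset.range (2*K))
      (fun t _ => Finset.mem_range.mpr (Nat.mod_lt _ (by omega)))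
    rw [heq]
    calc ∑ r ∈ Finset.range (2*K), (badF.filter (fun t => t % (2*K) = r)).card
        ≤ ∑ _r ∈ Finset.range (2*K), C := Finset.sum_le_sum (fun r _ => hfiber r)
      _ = 2*K*C := by simp [mul_comm]
  have hsplit : goodF.card + badF.card = s := by
    have h := Finset.card_filter_add_card_filter_not (s := Ico) (p := P)
    have hcard : Ico.card = s := by rw [hIco, Nat.card_Ico]; omega
    rw [hcard] at h
    exact h
  have hSeq : {t : ℕ | s ≤ t ∧ t < 2*s ∧
      ((gball G x (t + K)).ncard : ℝ) < (1 + δ) * ((gball G x (t - K)).ncard : ℝ)} = ↑goodF := by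
    ext t
    simp only [hgoodF, hIco, Finset.coe_filter, Finset.mem_Ico, Set.mem_setOf_eq, hP, hb]
    tauto
  rw [hSeq, Set.ncard_coe_finset]
  have h1p : (0:ℝ) < 1 - p := by linarith
  have hceil : (2*K*C : ℝ)/(1-p) < ((⌈(2*K*C:ℝ)/(1-p)⌉₊ + 1 : ℕ) : ℝ) := by
    push_cast
    exact lt_of_le_of_lt (Nat.le_ceil _) (by linarith)
  have hsR : ((⌈(2*K*C:ℝ)/(1-p)⌉₊ + 1 : ℕ) : ℝ) ≤ (s:ℝ) := Nat.cast_le.mpr hsN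
  have hKey : (2*K*C : ℝ) < (1-p) * s := by
    have hlt := lt_of_lt_of_le hceil hsR
    calc (2*K*C:ℝ) = ((2*K*C:ℝ)/(1-p)) * (1-p) := by field_simp
      _ < (s:ℝ) * (1-p) := by
          apply mul_lt_mul_of_pos_right hlt h1p
      _ = (1-p)*(s:ℝ) := by ring
  have hgoodR : (s:ℝ) - 2*K*C ≤ (goodF.card : ℝ) := by
    have hb2 : (badF.card : ℝ) ≤ 2*K*C := by exact_mod_cast hbadcard
    have : (goodF.card : ℝ) + (badF.card : ℝ) = s := by exact_mod_cast hsplit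
    linarith
  linarith
end

section
/- Let ε > 0 with 1 − (d+1)ε > 1/2, let G be a finite graph of degree bound d, and let H be an induced subgraph of G with |V(H)| ≥ ε|V(G)|. Suppose H is such that one can remove at most (d+1)ε|V(H)| vertices from H so that every remaining component A has |V(A)| ≤ K and i(A) ≤ ε. Let M be a maximal family of connected induced subgraphs C of H with pairwise distance d_H(V(C), V(D)) ≥ 2, each satisfying |V(C)| ≤ K and i_H(V(C)) ≤ ε. Then ∑_{C∈M} |V(C)| ≥ (ε / (4d²K²)) |V(G)|. -/
/-- The boundary of `T` inside the induced subgraph on `HS`: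
vertices of `T` with a `G`-neighbor in `HS ∖ T`. -/
def ibdry {V : Type*} (G : SimpleGraph V) (HS T : Set V) : Set V :=
  {x | x ∈ T ∧ ∃ y, y ∈ HS ∧ y ∉ T ∧ G.Adj x y}

open SimpleGraph

lemma aux_connected_induce_supp {α : Type*} (G : SimpleGraph α) (C : G.ConnectedComponent) :
    (G.induce C.supp).Connected := by
  classical
  obtain ⟨v, hv⟩ := C.exists_rep
  have hvs : v ∈ C.supp := (ConnectedComponent.mem_supp_iff _ _).mpr hv
  haveI : Nonempty ↑C.supp := ⟨⟨v, hvs⟩⟩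
  refine ⟨?_⟩
  rintro x y
  have hx : G.connectedComponentMk x.1 = C := (ConnectedComponent.mem_supp_iff _ _).mp x.2
  have hy : G.connectedComponentMk y.1 = C := (ConnectedComponent.mem_supp_iff _ _).mp y.2
  obtain ⟨p⟩ := ConnectedComponent.exact (hx.trans hy.symm)
  have hsub : Set.MapsTo id {z | z ∈ p.support} C.supp := by
    intro z hz
    have hr : G.Reachable x.1 z := (p.takeUntil z hz).reachable
    exact (ConnectedComponent.mem_supp_iff _ _).mpr ((ConnectedComponent.sound hr).symm.trans hx)
  have hc := p.connected_induce_support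
  have hre := (hc.preconnected ⟨x.1, p.start_mem_support⟩ ⟨y.1, p.end_mem_support⟩).map
    (induceHom Hom.id hsub)
  exact hre

lemma aux_connected_induce_image {α : Type*} (G : SimpleGraph α) (W : Set α)
    (C : (G.induce W).ConnectedComponent) :
    (G.induce (Subtype.val '' C.supp)).Connected := by
  have h1 := aux_connected_induce_supp (G.induce W) C
  let f : (G.induce W).induce C.supp →g G.induce (Subtype.val '' C.supp) :=
    { toFun := fun x => ⟨x.1.1, ⟨x.1, x.2, rfl⟩⟩,
      map_rel' := fun hab => hab }
  have hsurj : Function.Surjective f := by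
    rintro ⟨v, x, hx, rfl⟩
    exact ⟨⟨x, hx⟩, rfl⟩
  exact h1.map f hsurj

open Classical in
noncomputable def compF {V : Type*} [Fintype V] (G : SimpleGraph V) (W : Set V) (w : V) :
    Finset V :=
  if hw : w ∈ W then
    (Set.toFinite (Subtype.val '' ((G.induce W).connectedComponentMk ⟨w, hw⟩).supp)).toFinset
  else ∅

lemma compF_coe {V : Type*} [Fintype V] (G : SimpleGraph V) {W : Set V} {w : V} (hw : w ∈ W) :
    (compF G W w : Set V)
      = Subtype.val '' ((G.induce W).connectedComponentMk ⟨w, hw⟩).supp := by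
  rw [compF, dif_pos hw, Set.Finite.coe_toFinset]

lemma compF_card {V : Type*} [Fintype V] (G : SimpleGraph V) {W : Set V} {w : V} (hw : w ∈ W) :
    (compF G W w).card
      = (Subtype.val '' ((G.induce W).connectedComponentMk ⟨w, hw⟩).supp).ncard := by
  rw [compF, dif_pos hw, Set.ncard_eq_toFinset_card]


set_option maxHeartbeats 1000000 in
/-- Lemma (l202): if `H` (induced on `HS`, `|V(H)| ≥ ε|V(G)|`) can be cleaned by removing
at most `(d+1)ε|V(H)|` vertices so that all remaining components have size `≤ K` and
isoperimetric constant `≤ ε`, and `𝓜` is a maximal family of connected induced subgraphs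
of `H`, pairwise at distance `≥ 2` in `H`, each of size `≤ K` and isoperimetric constant
`≤ ε`, then `∑_{C∈𝓜} |V(C)| ≥ (ε/(4d²K²))·|V(G)|`. -/
theorem stmt8 {V : Type*} [Fintype V] [DecidableEq V] (G : SimpleGraph V)
    (d K : ℕ) (ε : ℝ) (HS : Set V) (𝓜 : Finset (Finset V))
    (hd : DegLE G d) (hd1 : 1 ≤ d) (hK : 1 ≤ K) (hε : 0 < ε)
    (hhalf : (1 : ℝ) / 2 < 1 - (d + 1 : ℝ) * ε)
    (hHbig : ε * (Fintype.card V : ℝ) ≤ (HS.ncard : ℝ))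
    (hrem : ∃ R : Set V, R ⊆ HS ∧ (R.ncard : ℝ) ≤ (d + 1 : ℝ) * ε * (HS.ncard : ℝ) ∧
      ∀ C : (G.induce (HS \ R)).ConnectedComponent,
        (Subtype.val '' C.supp).ncard ≤ K ∧
        ((ibdry G HS (Subtype.val '' C.supp)).ncard : ℝ)
          ≤ ε * ((Subtype.val '' C.supp).ncard : ℝ))
    (hmem : ∀ C ∈ 𝓜, C.Nonempty ∧ (C : Set V) ⊆ HS ∧ (G.induce (C : Set V)).Connected ∧
      C.card ≤ K ∧ ((ibdry G HS (C : Set V)).ncard : ℝ) ≤ ε * (C.card : ℝ))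
    (hpair : ∀ C ∈ 𝓜, ∀ D ∈ 𝓜, C ≠ D →
      ∀ x ∈ C, ∀ y ∈ D, x ≠ y ∧ ¬ G.Adj x y)
    (hmax : ∀ C' : Finset V, C'.Nonempty → (C' : Set V) ⊆ HS →
      (G.induce (C' : Set V)).Connected → C'.card ≤ K →
      ((ibdry G HS (C' : Set V)).ncard : ℝ) ≤ ε * (C'.card : ℝ) →
      (∀ D ∈ 𝓜, ∀ x ∈ C', ∀ y ∈ D, x ≠ y ∧ ¬ G.Adj x y) → C' ∈ 𝓜) :
    ε / (4 * (d : ℝ) ^ 2 * (K : ℝ) ^ 2) * (Fintype.card V : ℝ)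
      ≤ ∑ C ∈ 𝓜, (C.card : ℝ) := by
  classical
  obtain ⟨R, hR1, hR2, hR3⟩ := hrem
  set W : Set V := HS \ R with hWdef
  set S : ℝ := ∑ C ∈ 𝓜, (C.card : ℝ) with hSdef
  have hS0 : 0 ≤ S := Finset.sum_nonneg fun _ _ => Nat.cast_nonneg _
  -- neighborhood finsets
  set Nb : Finset V → Finset V :=
    fun D => D ∪ D.biUnion (fun y => (Set.toFinite (G.neighborSet y)).toFinset) with hNb
  set B1 : Finset V := 𝓜.biUnion Nb with hB1
  set WF : Finset V := (Set.toFinite W).toFinset with hWF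
  set F : Finset V := WF ∩ B1 with hF
  -- basic membership facts about compF
  have hself : ∀ w (hw : w ∈ W), w ∈ compF G W w := by
    intro w hw
    have : w ∈ (compF G W w : Set V) := by
      rw [compF_coe G hw]
      exact ⟨⟨w, hw⟩, (ConnectedComponent.mem_supp_iff _ _).mpr rfl, rfl⟩
    exact_mod_cast this
  have hmemW : ∀ w (hw : w ∈ W), ∀ x ∈ compF G W w,
      ∃ hx : x ∈ W, compF G W x = compF G W w := by
    intro w hw x hx
    have hx' : x ∈ (compF G W w : Set V) := by exact_mod_cast hx
    rw [compF_coe G hw] at hx'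
    obtain ⟨x', hx'1, rfl⟩ := hx'
    refine ⟨x'.2, ?_⟩
    have hcomp : (G.induce W).connectedComponentMk ⟨x'.1, x'.2⟩
        = (G.induce W).connectedComponentMk ⟨w, hw⟩ :=
      (ConnectedComponent.mem_supp_iff _ _).mp hx'1
    apply Finset.coe_injective
    rw [compF_coe G x'.2, compF_coe G hw, hcomp]
  -- goodness of components
  have hgood : ∀ w (hw : w ∈ W),
      (compF G W w).Nonempty ∧ ((compF G W w : Set V) ⊆ HS) ∧
      (G.induce ((compF G W w : Set V))).Connected ∧ (compF G W w).card ≤ K ∧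
      ((ibdry G HS ((compF G W w : Set V))).ncard : ℝ) ≤ ε * ((compF G W w).card : ℝ) := by
    intro w hw
    refine ⟨⟨w, hself w hw⟩, ?_, ?_, ?_, ?_⟩
    · rw [compF_coe G hw]
      exact (Subtype.coe_image_subset W _).trans Set.diff_subset
    · rw [compF_coe G hw]
      exact aux_connected_induce_image G W _
    · rw [compF_card G hw]
      exact (hR3 _).1
    · rw [compF_coe G hw, compF_card G hw]
      exact (hR3 _).2
  -- the cover
  have hcover : WF ⊆ F.biUnion (compF G W) := by
    intro v hv
    have hvW : v ∈ W := by rw [hWF, Set.Finite.mem_toFinset] at hv; exact hv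
    obtain ⟨hne, hsubHS, hconn, hcard, hbdry⟩ := hgood v hvW
    by_cases hmem' : compF G W v ∈ 𝓜
    · refine Finset.mem_biUnion.mpr ⟨v, ?_, hself v hvW⟩
      refine Finset.mem_inter.mpr ⟨hv, ?_⟩
      exact Finset.mem_biUnion.mpr ⟨_, hmem',
        Finset.mem_union_left _ (hself v hvW)⟩
    · obtain ⟨D, hD, x, hx, y, hy, hxy⟩ :
          ∃ D ∈ 𝓜, ∃ x ∈ compF G W v, ∃ y ∈ D, ¬(x ≠ y ∧ ¬ G.Adj x y) := by
        by_contra hno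
        push_neg at hno
        exact hmem' (hmax _ hne hsubHS hconn hcard hbdry hno)
      obtain ⟨hxW, hxc⟩ := hmemW v hvW x hx
      have hxB1 : x ∈ B1 := by
        rcases not_and_or.mp hxy with h | h
        · have : x = y := not_not.mp h
          subst this
          exact Finset.mem_biUnion.mpr ⟨D, hD, Finset.mem_union_left _ hy⟩
        · have hadj : G.Adj x y := not_not.mp h
          refine Finset.mem_biUnion.mpr ⟨D, hD, Finset.mem_union_right _ ?_⟩
          refine Finset.mem_biUnion.mpr ⟨y, hy, ?_⟩
          rw [Set.Finite.mem_toFinset]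
          exact hadj.symm
      refine Finset.mem_biUnion.mpr ⟨x, ?_, ?_⟩
      · exact Finset.mem_inter.mpr ⟨by rw [hWF, Set.Finite.mem_toFinset]; exact hxW, hxB1⟩
      · rw [hxc]; exact hself v hvW
  -- counting
  have h1 : WF.card ≤ F.card * K := by
    calc WF.card ≤ (F.biUnion (compF G W)).card := Finset.card_le_card hcover
      _ ≤ ∑ w ∈ F, (compF G W w).card := Finset.card_biUnion_le
      _ ≤ ∑ _w ∈ F, K := by
          refine Finset.sum_le_sum fun w hw => ?_
          have hwW : w ∈ W := by
            have := (Finset.mem_inter.mp hw).1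
            rwa [hWF, Set.Finite.mem_toFinset] at this
          exact (hgood w hwW).2.2.2.1
      _ = F.card * K := by rw [Finset.sum_const, smul_eq_mul]
  have h2 : F.card ≤ B1.card := Finset.card_le_card Finset.inter_subset_right
  have h3 : (B1.card : ℝ) ≤ (d + 1 : ℝ) * S := by
    have hnat : B1.card ≤ ∑ D ∈ 𝓜, D.card * (d + 1) := by
      refine (Finset.card_biUnion_le).trans (Finset.sum_le_sum fun D hD => ?_)
      have : (Nb D).card ≤ D.card + ∑ y ∈ D, ((Set.toFinite (G.neighborSet y)).toFinset).card := by
        exact (Finset.card_union_le _ _).trans (by gcongr; exact Finset.card_biUnion_le)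
      refine this.trans ?_
      have : ∑ y ∈ D, ((Set.toFinite (G.neighborSet y)).toFinset).card ≤ ∑ _y ∈ D, d := by
        refine Finset.sum_le_sum fun y _ => ?_
        rw [← Set.ncard_eq_toFinset_card]
        exact hd y
      simp only [Finset.sum_const, smul_eq_mul] at this
      rw [Nat.mul_add, Nat.mul_one]
      omega
    calc (B1.card : ℝ) ≤ (∑ D ∈ 𝓜, D.card * (d + 1) : ℕ) := by exact_mod_cast hnat
      _ = (d + 1 : ℝ) * S := by
          rw [hSdef]
          push_cast
          rw [← Finset.sum_mul, mul_comm]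
  -- size of W
  have hWcard : (WF.card : ℝ) = (HS.ncard : ℝ) - (R.ncard : ℝ) := by
    have hle : R.ncard ≤ HS.ncard := Set.ncard_le_ncard hR1 (Set.toFinite _)
    have : W.ncard = HS.ncard - R.ncard := Set.ncard_diff hR1 (Set.toFinite _)
    rw [hWF, ← Set.ncard_eq_toFinset_card, this]
    push_cast [hle]
    ring
  have hWbig : ε * (Fintype.card V : ℝ) / 2 ≤ (WF.card : ℝ) := by
    rw [hWcard]
    nlinarith [hHbig, hε.le, Nat.card_coe_set_eq HS]
  -- put it together
  clear hcover hgood hmemW hself hmax hmem hpair hR3 hd hHbig hR2 hWcard hR1 hhalf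
  clear_value S Nb B1 WF F
  clear hNb hB1 hWF hF
  clear hWdef W
  have hchain : ε * (Fintype.card V : ℝ) / 2 ≤ (K : ℝ) * ((d + 1 : ℝ) * S) := by
    have c1 : (WF.card : ℝ) ≤ (F.card : ℝ) * K := by exact_mod_cast h1
    have c2 : (F.card : ℝ) ≤ (B1.card : ℝ) := by exact_mod_cast h2
    have hK0 : (0:ℝ) ≤ (K:ℝ) := Nat.cast_nonneg _
    nlinarith [hWbig]
  have hd' : (1:ℝ) ≤ (d:ℝ) := by exact_mod_cast hd1
  have hK' : (1:ℝ) ≤ (K:ℝ) := by exact_mod_cast hK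
  have hdK : (1:ℝ) ≤ (d:ℝ) * K := by nlinarith
  have hpos : (0:ℝ) < 4 * (d : ℝ) ^ 2 * (K : ℝ) ^ 2 := by nlinarith [hdK]
  have key : 2 * (K:ℝ) * ((d:ℝ) + 1) ≤ 4 * (d:ℝ) ^ 2 * (K:ℝ) ^ 2 := by
    have s2 : 2 * (K:ℝ) * ((d:ℝ) + 1) ≤ 4 * (d:ℝ) * K := by nlinarith
    have s3 : 4 * (d:ℝ) * K ≤ 4 * (d:ℝ) ^ 2 * (K:ℝ) ^ 2 := by
      nlinarith [mul_nonneg (mul_nonneg (mul_nonneg (by norm_num : (0:ℝ) ≤ 4)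
        (by linarith : (0:ℝ) ≤ (d:ℝ))) (by linarith : (0:ℝ) ≤ (K:ℝ)))
        (sub_nonneg.mpr hdK)]
    linarith
  rw [div_mul_eq_mul_div, div_le_iff₀ hpos]
  nlinarith [hchain, mul_nonneg hS0 (sub_nonneg.mpr key)]
end

section
/- Let G be a finite graph and M a matching in G such that at most (ε/2)|V(G)| vertices of G are endpoints of augmenting paths for M of length shorter than T. Then the maximum matching M_G of G satisfies |M_G|/|V(G)| ≤ |M|/|V(G)| + 1/T + ε/2. -/
/-- `M` is a matching of `G`: a set of edges of `G`, pairwise vertex-disjoint. -/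
def IsMatchingSet {V : Type*} (G : SimpleGraph V) (M : Finset (Sym2 V)) : Prop :=
  (∀ e ∈ M, e ∈ G.edgeSet) ∧
  ∀ e ∈ M, ∀ f ∈ M, e ≠ f → ∀ v : V, ¬ (v ∈ e ∧ v ∈ f)

/-- `v` is unmatched by `M`. -/
def Unmatched {V : Type*} (M : Finset (Sym2 V)) (v : V) : Prop :=
  ∀ e ∈ M, v ∉ e

/-- `w 0, w 1, …, w m` is an augmenting path of length `m` for the matching `M`:
a path in `G` with distinct vertices, alternating unmatched/matched edges, of odd
length, with unmatched endpoints. -/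
def IsAugPath {V : Type*} (G : SimpleGraph V) (M : Finset (Sym2 V)) (m : ℕ)
    (w : ℕ → V) : Prop :=
  Odd m ∧ (∀ i ≤ m, ∀ j ≤ m, w i = w j → i = j) ∧
  (∀ i < m, G.Adj (w i) (w (i + 1))) ∧
  (∀ i < m, (s(w i, w (i + 1)) ∈ M ↔ Odd i)) ∧
  Unmatched M (w 0) ∧ Unmatched M (w m)

/-!
Compare `M` with an arbitrary matching `M'` through the two "mate" involutions. Starting at a
vertex covered by `M'` but not by `M` and following `M'`- and `M`-edges alternately traces a
component of the symmetric difference: a path that either has even length and ends at a vertex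
covered by `M` but not by `M'`, or has odd length and is an augmenting path for `M`. Since
`2|M'| - 2|M|` is the number of vertices covered only by `M'` minus those covered only by `M`,
the walks of the first kind cancel, those of the second kind shorter than `T` are counted by
the starting points of short augmenting paths, and the remaining walks have length `≥ T`; their
even-position vertices are pairwise distinct, so there are at most `2|V|/T` of them.
-/

open Finset

section AlternatingWalk

variable {V : Type*} {f g : V → V}

def altStep (f g : V → V) (k : ℕ) : V → V := if Even k then g else f

def altWalk (f g : V → V) (v : V) : ℕ → V
  | 0 => v
  | k + 1 => altStep f g k (altWalk f g v k)

/-- The first time the alternating walk stays put; `0` if it never does, which cannot happen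
when `V` is finite and `f v = v`. -/
noncomputable def altWalkLen (f g : V → V) (v : V) : ℕ :=
  sInf {k | altWalk f g v (k + 1) = altWalk f g v k}

@[simp] lemma altWalk_zero (v : V) : altWalk f g v 0 = v := rfl

lemma altWalk_succ (v : V) (k : ℕ) :
    altWalk f g v (k + 1) = altStep f g k (altWalk f g v k) := rfl

lemma altStep_of_even {k : ℕ} (hk : Even k) : altStep f g k = g := if_pos hk

lemma altStep_of_odd {k : ℕ} (hk : Odd k) : altStep f g k = f :=
  if_neg (Nat.not_even_iff_odd.2 hk)

lemma altStep_congr {i j : ℕ} (h : Even i ↔ Even j) : altStep f g i = altStep f g j := by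
  simp only [altStep, h]

theorem altWalk_succ_ne_of_lt_len {v : V} {i : ℕ} (hi : i < altWalkLen f g v) :
    altWalk f g v (i + 1) ≠ altWalk f g v i :=
  Nat.notMem_of_lt_sInf hi

variable (hf : Function.Involutive f) (hg : Function.Involutive g)
include hf hg

lemma altStep_involutive (k : ℕ) : Function.Involutive (altStep f g k) := by
  unfold altStep
  split_ifs
  exacts [hg, hf]

lemma altStep_altWalk_succ (v : V) (k : ℕ) :
    altStep f g k (altWalk f g v (k + 1)) = altWalk f g v k :=
  altStep_involutive hf hg k _

/-- Before it first stays put, an alternating walk from a fixed point of `f` never revisits a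
vertex: at a first repetition, stepping back once (or forward, on a parity mismatch) gives an
earlier repetition or a stay. -/
theorem altWalk_ne_of_lt {v : V} (hv : f v = v) {m : ℕ}
    (hm : ∀ i < m, altWalk f g v (i + 1) ≠ altWalk f g v i) :
    ∀ j ≤ m, ∀ i < j, altWalk f g v i ≠ altWalk f g v j := by
  intro j
  induction j using Nat.strong_induction_on with
  | _ j ih =>
  intro hjm i hij heq
  obtain ⟨j, rfl⟩ : ∃ j', j = j' + 1 := ⟨j - 1, by omega⟩
  have hback := altStep_altWalk_succ hf hg v j
  rw [← heq] at hback
  rcases i with _ | i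
  · rcases Nat.even_or_odd j with hj | hj
    · rw [altWalk_zero, altStep_congr (iff_of_true hj Even.zero),
        ← altWalk_zero (f := f) (g := g) v, ← altWalk_succ] at hback
      rcases Nat.eq_zero_or_pos j with rfl | hj0
      · exact hm 0 (by omega) hback
      · exact ih j (by omega) (by omega) 1 (by obtain ⟨t, ht⟩ := hj; omega) hback
    · rw [altStep_of_odd hj, altWalk_zero, hv] at hback
      exact ih j (by omega) (by omega) 0 hj.pos hback
  · by_cases hpar : Even i ↔ Even j
    · rw [altWalk_succ, altWalk_succ, altStep_congr hpar] at heq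
      exact ih j (by omega) (by omega) i (by omega)
        ((altStep_involutive hf hg j).injective heq)
    · have hpar' : Even (i + 1) ↔ Even j := by rw [Nat.even_add_one]; tauto
      rw [← altStep_congr hpar', ← altWalk_succ] at hback
      by_cases hij' : i + 1 = j
      · subst hij'
        exact hm (i + 1) (by omega) hback
      · have : i + 2 ≠ j := fun h => hpar (by rw [← h, Nat.even_add, iff_true_right even_two])
        exact ih j (by omega) (by omega) (i + 2) (by omega) hback

theorem altWalk_injOn {v : V} (hv : f v = v) {m : ℕ}
    (hm : ∀ i < m, altWalk f g v (i + 1) ≠ altWalk f g v i) :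
    Set.InjOn (altWalk f g v) (Set.Iic m) := by
  intro i hi j hj h
  by_contra hne
  rcases Nat.lt_or_gt_of_ne hne with hij | hij
  · exact altWalk_ne_of_lt hf hg hv hm j hj i hij h
  · exact altWalk_ne_of_lt hf hg hv hm i hi j hij h.symm

theorem altWalk_len_succ [Finite V] {v : V} (hv : f v = v) :
    altWalk f g v (altWalkLen f g v + 1) = altWalk f g v (altWalkLen f g v) := by
  have hstay : ∃ k, altWalk f g v (k + 1) = altWalk f g v k := by
    by_contra! h
    refine not_injective_infinite_finite (altWalk f g v) fun i j hij => ?_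
    exact altWalk_injOn hf hg hv (m := max i j) (fun k _ => h k) (le_max_left i j)
      (le_max_right i j) hij
  exact Nat.sInf_mem hstay

theorem eq_altWalk_sub_of_altWalk_eq {v₁ v₂ : V} {i j : ℕ} (hij : i ≤ j) (hpar : Even i ↔ Even j)
    (h : altWalk f g v₁ i = altWalk f g v₂ j) : v₁ = altWalk f g v₂ (j - i) := by
  induction i generalizing j with
  | zero => simpa using h
  | succ i ih =>
    obtain ⟨j, rfl⟩ : ∃ j', j = j' + 1 := ⟨j - 1, by omega⟩
    have hpar' : Even i ↔ Even j := by simpa only [Nat.even_add_one, not_iff_not] using hpar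
    rw [altWalk_succ, altWalk_succ, altStep_congr hpar'] at h
    rw [Nat.add_sub_add_right]
    exact ih (by omega) hpar' ((altStep_involutive hf hg j).injective h)

/-- Alternating walks from fixed points of `f` that meet at even times `i` and `j` are the same
walk at the same time: otherwise, tracing back, the fixed point `v₁` would appear at a positive
even time of the second walk, where it would have to stay put. -/
theorem eq_and_eq_of_altWalk_eq {v₁ v₂ : V} (hv₁ : f v₁ = v₁) (hv₂ : f v₂ = v₂) {i j : ℕ}
    (hi : Even i) (hj : Even j)
    (hm₁ : ∀ k < i, altWalk f g v₁ (k + 1) ≠ altWalk f g v₁ k)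
    (hm₂ : ∀ k < j, altWalk f g v₂ (k + 1) ≠ altWalk f g v₂ k)
    (h : altWalk f g v₁ i = altWalk f g v₂ j) : v₁ = v₂ ∧ i = j := by
  wlog hij : i ≤ j generalizing v₁ v₂ i j
  · obtain ⟨hv, hji⟩ := this hv₂ hv₁ hj hi hm₂ hm₁ h.symm (by omega)
    exact ⟨hv.symm, hji.symm⟩
  have hback := eq_altWalk_sub_of_altWalk_eq hf hg hij (iff_of_true hi hj) h
  by_cases hji : j - i = 0
  · rw [hji, altWalk_zero] at hback
    exact ⟨hback, by omega⟩
  obtain ⟨l, hl⟩ : ∃ l, j - i = l + 1 := ⟨j - i - 1, by omega⟩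
  have hlodd : Odd l := by
    obtain ⟨a, rfl⟩ := hi
    obtain ⟨b, rfl⟩ := hj
    exact ⟨b - a - 1, by omega⟩
  have hstay := altStep_altWalk_succ hf hg v₂ l
  rw [altStep_of_odd hlodd, ← hl, ← hback, hv₁, hback, hl] at hstay
  exact absurd hstay (hm₂ l (by omega))

theorem apply_altWalk_len_of_odd [Finite V] {v : V} (hv : f v = v)
    (hodd : Odd (altWalkLen f g v)) :
    f (altWalk f g v (altWalkLen f g v)) = altWalk f g v (altWalkLen f g v) := by
  have hstay := altWalk_len_succ hf hg hv (g := g)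
  rwa [altWalk_succ, altStep_of_odd hodd] at hstay

theorem apply_altWalk_len_of_even [Finite V] {v : V} (hv : f v = v) (hgv : g v ≠ v)
    (heven : Even (altWalkLen f g v)) :
    f (altWalk f g v (altWalkLen f g v)) ≠ altWalk f g v (altWalkLen f g v) ∧
      g (altWalk f g v (altWalkLen f g v)) = altWalk f g v (altWalkLen f g v) := by
  have hstay := altWalk_len_succ hf hg hv (g := g)
  rw [altWalk_succ, altStep_of_even heven] at hstay
  refine ⟨fun h => ?_, hstay⟩
  obtain ⟨l, hl⟩ : ∃ l, altWalkLen f g v = l + 1 := by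
    refine Nat.exists_eq_add_one.2 (Nat.pos_of_ne_zero fun h0 => hgv ?_)
    rwa [h0, altWalk_zero] at hstay
  rw [hl] at h heven
  have hlodd : Odd l := by simpa [Nat.even_add_one] using heven
  have hback := altStep_altWalk_succ hf hg v l
  rw [altStep_of_odd hlodd, h] at hback
  exact altWalk_succ_ne_of_lt_len (by omega) hback

theorem card_mul_le_card_of_altWalk [Fintype V] {P : Finset V} {K : ℕ}
    (hP : ∀ v ∈ P, f v = v ∧ ∀ k < 2 * K, altWalk f g v (k + 1) ≠ altWalk f g v k) :
    #P * (K + 1) ≤ Fintype.card V := by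
  classical
  calc #P * (K + 1) = #(P ×ˢ range (K + 1)) := by rw [card_product, card_range]
    _ ≤ #(univ : Finset V) :=
      card_le_card_of_injOn (fun p => altWalk f g p.1 (2 * p.2)) (fun _ _ => mem_univ _) ?_
    _ = Fintype.card V := card_univ
  rintro ⟨v₁, k₁⟩ h₁ ⟨v₂, k₂⟩ h₂ h
  simp only [coe_product, Set.mem_prod, mem_coe, coe_range, Set.mem_Iio] at h₁ h₂
  obtain ⟨hv, hk⟩ := eq_and_eq_of_altWalk_eq hf hg (hP _ h₁.1).1 (hP _ h₂.1).1 (even_two_mul k₁)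
    (even_two_mul k₂) (fun k hk => (hP _ h₁.1).2 k (by omega))
    (fun k hk => (hP _ h₂.1).2 k (by omega)) h
  simp only [Prod.mk.injEq]
  exact ⟨hv, by omega⟩

end AlternatingWalk

section Matching

variable {V : Type*} {G : SimpleGraph V} {M : Finset (Sym2 V)} {u v : V}

open Classical in
noncomputable def mate (M : Finset (Sym2 V)) (v : V) : V :=
  if h : ∃ u, s(v, u) ∈ M then h.choose else v

lemma mate_mem (h : mate M v ≠ v) : s(v, mate M v) ∈ M := by
  unfold mate at h ⊢
  split_ifs at h ⊢ with hex
  · exact hex.choose_spec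
  · exact absurd rfl h

def matchedVertices [DecidableEq V] (M : Finset (Sym2 V)) : Finset V :=
  M.biUnion Sym2.toFinset

lemma mem_matchedVertices [DecidableEq V] : v ∈ matchedVertices M ↔ ¬ Unmatched M v := by
  simp [matchedVertices, Unmatched]

namespace IsMatchingSet

variable (hM : IsMatchingSet G M)
include hM

lemma ne_of_mem (h : s(v, u) ∈ M) : v ≠ u :=
  G.ne_of_adj (hM.1 _ h)

lemma mate_eq (h : s(v, u) ∈ M) : mate M v = u := by
  have hex : ∃ u, s(v, u) ∈ M := ⟨u, h⟩
  rw [mate, dif_pos hex]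
  by_contra hne
  exact hM.2 _ hex.choose_spec _ h (fun e => hne (Sym2.congr_right.1 e)) v
    ⟨Sym2.mem_mk_left _ _, Sym2.mem_mk_left _ _⟩

lemma mate_eq_self_iff : mate M v = v ↔ Unmatched M v := by
  refine ⟨fun hv e he hve => ?_,
    fun hv => by_contra fun hne => hv _ (mate_mem hne) (Sym2.mem_mk_left _ _)⟩
  obtain ⟨u, rfl⟩ := Sym2.mem_iff_exists.1 hve
  exact hM.ne_of_mem he (hv.symm.trans (hM.mate_eq he))

lemma mate_involutive : Function.Involutive (mate M) := by
  intro v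
  by_cases hv : mate M v = v
  · rw [hv, hv]
  · exact hM.mate_eq (Sym2.eq_swap ▸ mate_mem hv)

lemma card_matchedVertices [DecidableEq V] : #(matchedVertices M) = 2 * #M := by
  rw [matchedVertices, card_biUnion, sum_congr rfl fun e he =>
    Sym2.card_toFinset_of_not_isDiag e (G.not_isDiag_of_mem_edgeSet (hM.1 e he)),
    sum_const, smul_eq_mul, mul_comm]
  intro e he e' he' hne
  rw [Function.onFun, disjoint_left]
  exact fun v hv hv' => hM.2 e he e' he' hne v ⟨by simpa using hv, by simpa using hv'⟩

end IsMatchingSet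

end Matching

section MatchingWalk

variable {V : Type*} {G : SimpleGraph V} {M M' : Finset (Sym2 V)}

def augPathStarts (G : SimpleGraph V) (M : Finset (Sym2 V)) (T : ℕ) : Set V :=
  {x | ∃ m < T, ∃ w : ℕ → V, IsAugPath G M m w ∧ w 0 = x}

variable (hM : IsMatchingSet G M) (hM' : IsMatchingSet G M')
include hM hM'

theorem isAugPath_altWalk [Finite V] {v : V} (hv : Unmatched M v)
    (hodd : Odd (altWalkLen (mate M) (mate M') v)) :
    IsAugPath G M (altWalkLen (mate M) (mate M') v) (altWalk (mate M) (mate M') v) := by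
  have hf := hM.mate_involutive
  have hg := hM'.mate_involutive
  have hfv : mate M v = v := hM.mate_eq_self_iff.2 hv
  set m := altWalkLen (mate M) (mate M') v
  set w := altWalk (mate M) (mate M') v
  have hmin : ∀ i < m, w (i + 1) ≠ w i := fun i hi => altWalk_succ_ne_of_lt_len hi
  have hinj := altWalk_injOn hf hg hfv hmin
  have hmemM : ∀ i < m, Odd i → s(w i, w (i + 1)) ∈ M := by
    intro i hi hodd
    have hstep : w (i + 1) = mate M (w i) :=
      (altWalk_succ v i).trans (congrFun (altStep_of_odd hodd) _)
    exact hstep ▸ mate_mem (hstep ▸ hmin i hi)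
  have hmemM' : ∀ i < m, Even i → s(w i, w (i + 1)) ∈ M' := by
    intro i hi heven
    have hstep : w (i + 1) = mate M' (w i) :=
      (altWalk_succ v i).trans (congrFun (altStep_of_even heven) _)
    exact hstep ▸ mate_mem (hstep ▸ hmin i hi)
  have hnotM : ∀ i < m, Even i → s(w i, w (i + 1)) ∉ M := by
    intro i hi heven hmem
    have hmate := hM.mate_eq hmem
    rcases i with _ | i
    · exact hmin 0 hi (hmate ▸ hfv)
    · have hiodd : Odd i := by simpa [Nat.even_add_one] using heven
      have hback := altStep_altWalk_succ hf hg v i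
      rw [altStep_of_odd hiodd, hmate] at hback
      exact absurd (hinj (Set.mem_Iic.2 (by omega)) (Set.mem_Iic.2 (by omega)) hback) (by omega)
  refine ⟨hodd, fun i hi j hj => @hinj i hi j hj, fun i hi => ?_,
    fun i hi => ⟨fun h => ?_, hmemM i hi⟩, hv,
    hM.mate_eq_self_iff.1 (apply_altWalk_len_of_odd hf hg hfv hodd)⟩
  · rcases Nat.even_or_odd i with h | h
    exacts [hM'.1 _ (hmemM' i hi h), hM.1 _ (hmemM i hi h)]
  · exact Nat.not_even_iff_odd.1 fun he => hnotM i hi he h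

lemma mem_matchedVertices_sdiff [DecidableEq V] {v : V} :
    v ∈ matchedVertices M' \ matchedVertices M ↔ mate M' v ≠ v ∧ mate M v = v := by
  simp only [mem_sdiff, mem_matchedVertices, ne_eq, not_not, hM.mate_eq_self_iff,
    hM'.mate_eq_self_iff]

theorem card_filter_even_altWalkLen_le [Fintype V] [DecidableEq V] :
    #{v ∈ matchedVertices M' \ matchedVertices M | Even (altWalkLen (mate M) (mate M') v)} ≤
      #(matchedVertices M \ matchedVertices M') := by
  have hf := hM.mate_involutive
  have hg := hM'.mate_involutive
  refine card_le_card_of_injOn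
    (fun v => altWalk (mate M) (mate M') v (altWalkLen (mate M) (mate M') v))
    (fun v hv => ?_) (fun v₁ h₁ v₂ h₂ h => ?_)
  · obtain ⟨hv, heven⟩ := mem_filter.1 hv
    obtain ⟨hgv, hfv⟩ := (mem_matchedVertices_sdiff hM hM').1 hv
    rw [mem_coe, mem_matchedVertices_sdiff hM' hM]
    exact apply_altWalk_len_of_even hf hg hfv hgv heven
  · obtain ⟨hv₁, heven₁⟩ := mem_filter.1 h₁
    obtain ⟨hv₂, heven₂⟩ := mem_filter.1 h₂
    exact (eq_and_eq_of_altWalk_eq hf hg ((mem_matchedVertices_sdiff hM hM').1 hv₁).2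
      ((mem_matchedVertices_sdiff hM hM').1 hv₂).2 heven₁ heven₂
      (fun _ => altWalk_succ_ne_of_lt_len) (fun _ => altWalk_succ_ne_of_lt_len) h).1

theorem card_filter_le_altWalkLen_mul_le [Fintype V] [DecidableEq V] (T : ℕ) :
    #{v ∈ matchedVertices M' \ matchedVertices M | T ≤ altWalkLen (mate M) (mate M') v} * T ≤
      2 * Fintype.card V := by
  have hK := card_mul_le_card_of_altWalk hM.mate_involutive hM'.mate_involutive (K := T / 2)
    (P := {v ∈ matchedVertices M' \ matchedVertices M | T ≤ altWalkLen (mate M) (mate M') v})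
    fun v hv => ⟨((mem_matchedVertices_sdiff hM hM').1 (mem_filter.1 hv).1).2, fun k hk =>
      altWalk_succ_ne_of_lt_len (hk.trans_le ((Nat.mul_div_le T 2).trans (mem_filter.1 hv).2))⟩
  calc _ ≤ _ * (2 * (T / 2 + 1)) := Nat.mul_le_mul_left _ (by omega)
    _ ≤ 2 * Fintype.card V := by linarith

theorem two_mul_card_le [Fintype V] [DecidableEq V] (T : ℕ) :
    2 * #M' ≤ 2 * #M + (augPathStarts G M T).ncard +
      #{v ∈ matchedVertices M' \ matchedVertices M | T ≤ altWalkLen (mate M) (mate M') v} := by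
  set A := matchedVertices M' \ matchedVertices M
  set len := altWalkLen (mate M) (mate M')
  have hcount : 2 * #M' + #(matchedVertices M \ matchedVertices M') = 2 * #M + #A := by
    rw [← hM.card_matchedVertices, ← hM'.card_matchedVertices, add_comm, card_sdiff_add_card,
      union_comm, ← card_sdiff_add_card, add_comm]
  have hsplit : #A ≤ #{v ∈ A | Even (len v)} + #{v ∈ A | Odd (len v) ∧ len v < T} +
      #{v ∈ A | T ≤ len v} := by
    refine (card_le_card fun v hv => ?_).trans
      ((card_union_le _ _).trans (Nat.add_le_add_right (card_union_le _ _) _))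
    simp only [mem_union, mem_filter, hv, true_and]
    rcases Nat.even_or_odd (len v) with h | h
    · exact Or.inl (Or.inl h)
    · rcases lt_or_ge (len v) T with hT | hT
      exacts [Or.inl (Or.inr ⟨h, hT⟩), Or.inr hT]
  have heven : #{v ∈ A | Even (len v)} ≤ #(matchedVertices M \ matchedVertices M') :=
    card_filter_even_altWalkLen_le hM hM'
  have haug : #{v ∈ A | Odd (len v) ∧ len v < T} ≤ (augPathStarts G M T).ncard := by
    rw [← Set.ncard_coe_finset]
    refine Set.ncard_le_ncard (fun v hv => ?_) (Set.toFinite _)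
    obtain ⟨hv, hodd, hlt⟩ := mem_filter.1 hv
    have hunm := hM.mate_eq_self_iff.1 ((mem_matchedVertices_sdiff hM hM').1 hv).2
    exact ⟨_, hlt, _, isAugPath_altWalk hM hM' hunm hodd, rfl⟩
  omega

theorem card_le_card_add_ncard_augPathStarts [Fintype V] {T : ℕ} (hT : 0 < T) :
    (#M' : ℝ) ≤ #M + (augPathStarts G M T).ncard / 2 + Fintype.card V / T := by
  classical
  have hcard : (2 * #M' : ℝ) ≤ 2 * #M + (augPathStarts G M T).ncard +
      #{v ∈ matchedVertices M' \ matchedVertices M | T ≤ altWalkLen (mate M) (mate M') v} := by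
    exact_mod_cast two_mul_card_le hM hM' T
  have hlong : (#{v ∈ matchedVertices M' \ matchedVertices M |
      T ≤ altWalkLen (mate M) (mate M') v} : ℝ) ≤ 2 * (Fintype.card V / T) := by
    rw [← mul_div_assoc, le_div_iff₀ (by exact_mod_cast hT)]
    exact_mod_cast card_filter_le_altWalkLen_mul_le hM hM' T
  linarith

end MatchingWalk

/-- If at most `(ε/2)|V(G)|` vertices of a finite graph `G` are starting points of
augmenting paths of length `< T` for a matching `M`, then any matching `M'` of `G`
satisfies `|M'|/|V| ≤ |M|/|V| + 1/T + ε/2`; in particular this bounds the maximum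
matching. -/
theorem stmt16 {V : Type*} [Fintype V] (G : SimpleGraph V) (M : Finset (Sym2 V))
    (hM : IsMatchingSet G M) (T : ℕ) (hT : 1 ≤ T) (ε : ℝ) (hε : 0 < ε)
    (hfew : (({x : V | ∃ m < T, ∃ w : ℕ → V, IsAugPath G M m w ∧ w 0 = x}).ncard : ℝ)
      ≤ ε / 2 * (Fintype.card V : ℝ)) :
    ∀ M' : Finset (Sym2 V), IsMatchingSet G M' →
      (M'.card : ℝ) / (Fintype.card V : ℝ)
        ≤ (M.card : ℝ) / (Fintype.card V : ℝ) + 1 / (T : ℝ) + ε / 2 := by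
  intro M' hM'
  obtain hn | hn := (Fintype.card V).eq_zero_or_pos
  · simp only [hn, CharP.cast_eq_zero, div_zero, zero_add]
    positivity
  have hn' : (0 : ℝ) < Fintype.card V := by exact_mod_cast hn
  have hfew' : ((augPathStarts G M T).ncard : ℝ) ≤ ε / 2 * Fintype.card V := hfew
  have hbound := card_le_card_add_ncard_augPathStarts hM hM' hT
  calc (#M' : ℝ) / Fintype.card V
      ≤ (#M + ε / 2 * Fintype.card V + Fintype.card V / T) / Fintype.card V := by
        gcongr
        linarith [mul_pos hε hn']
    _ = #M / Fintype.card V + 1 / T + ε / 2 := by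
        field_simp
        ring
end
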